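/- There exist universal constants c₁, c₂ > 0 such that for all n ≥ 1, all ε with 1/n ≤ ε ≤ 1/2, every subset A ⊆ L_mid, and every x* ∈ L_mid: c₁·(score↓(x*,A) + score↑(x*,A))/√(n·ln(1/ε)) ≤ Pr_{(x,y) ← D′}[y ∈ A | x = x*] ≤ c₂·(score↓(x*,A) + score↑(x*,A))/√(n·ln(1/ε)). -/

import Mathlib

open Finset

/-- The Hamming weight `‖x‖₁` of `x ∈ {0,1}^n`. -/
def wt {n : ℕ} (x : Fin n → Bool) : ℕ :=
  (Finset.univ.filter (fun i => x i = true)).card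

/-- The Hamming distance `‖x − y‖₁`. -/
def hamm {n : ℕ} (x y : Fin n → Bool) : ℕ :=
  (Finset.univ.filter (fun i => x i ≠ y i)).card

/-- The parameter `d = d(n,ε) = 2⌈√(2n·ln(100/ε))⌉`. -/
noncomputable def dPar (n : ℕ) (ε : ℝ) : ℕ :=
  2 * ⌈Real.sqrt (2 * n * Real.log (100 / ε))⌉₊

open Classical in
/-- The middle layers `L_mid = {x : (n−d)/2 ≤ ‖x‖₁ ≤ (n+d)/2}`. -/
noncomputable def Lmid (n : ℕ) (ε : ℝ) : Finset (Fin n → Bool) :=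
  Finset.univ.filter (fun x =>
    ((n : ℝ) - dPar n ε) / 2 ≤ (wt x : ℝ) ∧ (wt x : ℝ) ≤ ((n : ℝ) + dPar n ε) / 2)

/-- The `j`-th point (from the bottom) of the path from `0^n` to `1^n` determined by the
permutation `π`: its ones are exactly in positions `π(0),…,π(j−1)`. -/
def pathPoint {n : ℕ} (π : Equiv.Perm (Fin n)) (j : ℕ) : Fin n → Bool :=
  fun i => decide ((π.symm i : ℕ) < j)

/-- The indices `j` of the points of the path `π` lying in the middle layers `L_mid`. -/
noncomputable def pmidIdx (n : ℕ) (ε : ℝ) (π : Equiv.Perm (Fin n)) : Finset ℕ :=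
  (Finset.range (n + 1)).filter (fun j => pathPoint π j ∈ Lmid n ε)

/-- The paths from `0^n` to `1^n` passing through `x` (paths are parametrized by
permutations; the path of `π` passes through `x` iff its point at level `‖x‖₁` is `x`). -/
noncomputable def pathsThrough (n : ℕ) (x : Fin n → Bool) : Finset (Equiv.Perm (Fin n)) :=
  Finset.univ.filter (fun π => pathPoint π (wt x) = x)

/-- `Pr_{(x,y) ← D′}[y ∈ A ∣ x = x*]`: given `x*`, pick a path `π` uniformly among all
paths through `0^n`, `x*` and `1^n`, then pick `y` uniformly from the points of `π`
lying in `L_mid`. -/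
noncomputable def prYinA (n : ℕ) (ε : ℝ) (x : Fin n → Bool) (A : Finset (Fin n → Bool)) : ℝ :=
  (∑ π ∈ pathsThrough n x,
      (((pmidIdx n ε π).filter (fun j => pathPoint π j ∈ A)).card : ℝ) /
        ((pmidIdx n ε π).card : ℝ)) /
    ((pathsThrough n x).card : ℝ)

open Classical in
/-- `dens↓_k(x,A)`: the probability that a uniformly random `y ≼ x` with `‖x−y‖₁ = k`
lies in `A` (if `k ≤ ‖x‖₁`, and `0` otherwise). -/
noncomputable def densDown {n : ℕ} (x : Fin n → Bool) (A : Finset (Fin n → Bool)) (k : ℕ) : ℝ :=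
  if k ≤ wt x then
    ((A.filter (fun y => (∀ i, y i ≤ x i) ∧ hamm y x = k)).card : ℝ) / ((wt x).choose k : ℝ)
  else 0

open Classical in
/-- `dens↑_k(x,A)`: the probability that a uniformly random `y ≽ x` with `‖y−x‖₁ = k`
lies in `A` (if `k ≤ n − ‖x‖₁`, and `0` otherwise). -/
noncomputable def densUp {n : ℕ} (x : Fin n → Bool) (A : Finset (Fin n → Bool)) (k : ℕ) : ℝ :=
  if k ≤ n - wt x then
    ((A.filter (fun y => (∀ i, x i ≤ y i) ∧ hamm x y = k)).card : ℝ) / ((n - wt x).choose k : ℝ)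
  else 0

/-- `score↓(x,A) = Σ_{k=0}^n dens↓_k(x,A)`. -/
noncomputable def scoreDown {n : ℕ} (x : Fin n → Bool) (A : Finset (Fin n → Bool)) : ℝ :=
  ∑ k ∈ Finset.range (n + 1), densDown x A k

/-- `score↑(x,A) = Σ_{k=1}^n dens↑_k(x,A)`. -/
noncomputable def scoreUp {n : ℕ} (x : Fin n → Bool) (A : Finset (Fin n → Bool)) : ℝ :=
  ∑ k ∈ Finset.Icc 1 n, densUp x A k

/-!
A path is a permutation `π`, its `j`-th point being the indicator of `π {0, …, j - 1}`.
Permutations `σ` with `x ∘ σ = x` act on the paths through `x` by `π ↦ σ * π`, compatibly with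
taking the `j`-th point, and they act transitively on the points of weight `j` below `x`
(for `j ≤ ‖x‖₁`) resp. above `x` (for `j ≥ ‖x‖₁`). So the `j`-th point of a uniform path through
`x` is uniform on those points, and `Pr[π_j ∈ A] = dens_{|j - ‖x‖₁|}(x, A)`. As `A ⊆ L_mid`, the
levels outside the middle ones contribute nothing, so averaging over the `#J` middle levels gives
exactly `Pr[y ∈ A | x] = (score↓ + score↑) / #J`. Finally `d ≈ 2 √(2 n ln (100/ε))` and
`ln (100/ε) ≤ 8 ln (1/ε)` for `ε ≤ 1/2`, so `√(n ln (1/ε)) ≤ #J ≤ 11 √(n ln (1/ε))`.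
-/

theorem Equiv.Perm.exists_comp_eq_of_card_fiber_eq {α γ : Type*} [Fintype α] [DecidableEq γ]
    {f g : α → γ} (h : ∀ c, #{a | f a = c} = #{a | g a = c}) :
    ∃ σ : Equiv.Perm α, g ∘ σ = f :=
  ⟨Equiv.ofFiberEquiv fun c => Fintype.equivOfCardEq (by simpa [Fintype.card_subtype] using h c),
    funext (Equiv.ofFiberEquiv_map _)⟩

theorem card_filter_mem_mul_card_eq_of_card_fiber_eq {ι κ : Type*} [DecidableEq κ]
    {P : Finset ι} {Y : Finset κ} {f : ι → κ} (hf : ∀ i ∈ P, f i ∈ Y)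
    (hfib : ∀ y ∈ Y, ∀ y' ∈ Y, #{i ∈ P | f i = y} = #{i ∈ P | f i = y'}) (A : Finset κ) :
    #{i ∈ P | f i ∈ A} * #Y = #P * #{y ∈ A | y ∈ Y} := by
  rcases Y.eq_empty_or_nonempty with rfl | ⟨y₀, hy₀⟩
  · simp
  have hP : #P = #Y * #{i ∈ P | f i = y₀} := by
    rw [card_eq_sum_card_fiberwise hf, sum_congr rfl fun y hy => hfib y hy y₀ hy₀, sum_const,
      smul_eq_mul]
  have hPA : #{i ∈ P | f i ∈ A} = #{y ∈ A | y ∈ Y} * #{i ∈ P | f i = y₀} := by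
    rw [card_eq_sum_card_fiberwise (t := {y ∈ A | y ∈ Y})
        fun i hi => by simp only [mem_coe, mem_filter] at hi ⊢; exact ⟨hi.2, hf i hi.1⟩,
      sum_congr rfl fun y hy => ?_, sum_const, smul_eq_mul]
    rw [mem_filter] at hy
    rw [filter_filter, ← hfib y hy.2 y₀ hy₀]
    congr 1
    exact filter_congr fun i _ => ⟨fun h => h.2, fun h => ⟨h ▸ hy.1, h⟩⟩
  rw [hPA, hP]
  ring

section BoolVectors

variable {n : ℕ}

theorem wt_le (x : Fin n → Bool) : wt x ≤ n :=
  (card_le_univ _).trans_eq (Fintype.card_fin n)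

theorem wt_bot : wt (⊥ : Fin n → Bool) = 0 := by
  simp [wt]

theorem wt_top : wt (⊤ : Fin n → Bool) = n := by
  simp [wt]

theorem wt_le_of_le {u v : Fin n → Bool} (h : u ≤ v) : wt u ≤ wt v :=
  card_le_card fun i => by simpa using Bool.le_iff_imp.1 (h i)

theorem card_filter_false_true_of_le {u v : Fin n → Bool} (h : u ≤ v) :
    #{i | u i = false ∧ v i = true} = wt v - wt u := by
  rw [wt, wt, ← card_sdiff_of_subset fun i => by simpa using Bool.le_iff_imp.1 (h i)]
  congr 1
  ext i
  simp [and_comm]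

theorem hamm_eq_wt_sub_wt {u v : Fin n → Bool} (h : u ≤ v) : hamm u v = wt v - wt u := by
  rw [hamm, ← card_filter_false_true_of_le h]
  congr 1
  ext i
  have := Bool.le_iff_imp.1 (h i)
  cases hu : u i <;> cases hv : v i <;> simp_all

theorem card_filter_pair_eq_of_le {u v u' v' : Fin n → Bool} (h : u ≤ v) (h' : u' ≤ v')
    (hu : wt u = wt u') (hv : wt v = wt v') (c : Bool × Bool) :
    #{i | (u i, v i) = c} = #{i | (u' i, v' i) = c} := by
  have key : ∀ {u v : Fin n → Bool}, u ≤ v → ∀ c : Bool × Bool, #{i | (u i, v i) = c} =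
      if c = (true, true) then wt u else if c = (false, true) then wt v - wt u
      else if c = (false, false) then n - wt v else 0 := by
    intro u v h c
    have hle := fun i => Bool.le_iff_imp.1 (h i)
    obtain ⟨_ | _, _ | _⟩ := c <;> simp only [Prod.mk.injEq, reduceCtorEq, if_true, if_false,
      and_true, and_false]
    · have hsplit := card_filter_add_card_filter_not (s := univ) (fun i => v i = true)
      rw [card_univ, Fintype.card_fin] at hsplit
      have hff : #{i | u i = false ∧ v i = false} = #{i | ¬v i = true} := by
        congr 1; ext i
        cases hu : u i <;> cases hv : v i <;> simp_all
      rw [hff, wt]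
      omega
    · exact card_filter_false_true_of_le h
    · rw [card_eq_zero, filter_eq_empty_iff]
      intro i _ ⟨hu, hv⟩
      simp_all
    · rw [wt]; congr 1; ext i
      cases hu : u i <;> cases hv : v i <;> simp_all
  rw [key h, key h', hu, hv]

theorem exists_perm_comp_eq_of_le {u v u' v' : Fin n → Bool} (h : u ≤ v) (h' : u' ≤ v')
    (hu : wt u = wt u') (hv : wt v = wt v') :
    ∃ σ : Equiv.Perm (Fin n), u' ∘ σ = u ∧ v' ∘ σ = v := by
  obtain ⟨σ, hσ⟩ := Equiv.Perm.exists_comp_eq_of_card_fiber_eq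
    (f := fun i => (u i, v i)) (g := fun i => (u' i, v' i)) (card_filter_pair_eq_of_le h h' hu hv)
  exact ⟨σ, funext fun i => congrArg Prod.fst (congrFun hσ i),
    funext fun i => congrArg Prod.snd (congrFun hσ i)⟩

open Classical in
theorem card_filter_le_le_wt_eq {u v : Fin n → Bool} (h : u ≤ v) {j : ℕ} (hj : wt u ≤ j) :
    #{y | u ≤ y ∧ y ≤ v ∧ wt y = j} = (wt v - wt u).choose (j - wt u) := by
  rw [← card_filter_false_true_of_le h, ← card_powersetCard]
  refine card_nbij' (fun y => ({i | u i = false ∧ y i = true} : Finset _))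
    (fun s i => u i || decide (i ∈ s)) ?_ ?_ ?_ ?_
  · intro y hy
    simp only [coe_filter, mem_univ, true_and, Set.mem_ofPred_eq, mem_coe, mem_powersetCard] at hy ⊢
    refine ⟨fun i => ?_, by rw [card_filter_false_true_of_le hy.1, hy.2.2]⟩
    have := Bool.le_iff_imp.1 (hy.2.1 i)
    simp_all
  · intro s hs
    simp only [coe_filter, mem_univ, true_and, Set.mem_ofPred_eq, mem_coe,
      mem_powersetCard] at hs ⊢
    have hsub : ∀ i ∈ s, u i = false ∧ v i = true := fun i hi => by simpa using hs.1 hi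
    have hle : u ≤ fun i => u i || decide (i ∈ s) :=
      fun i => Bool.le_iff_imp.2 fun hi => by simp [hi]
    refine ⟨hle, fun i => ?_, ?_⟩
    · by_cases hi : i ∈ s
      · simp [hi, (hsub i hi).2]
      · simpa [hi] using h i
    · have hcard := card_filter_false_true_of_le hle
      have hs' : ({i | u i = false ∧ (u i || decide (i ∈ s)) = true} : Finset _) = s := by
        ext i
        by_cases hi : i ∈ s <;> simp [hi, hsub]
      rw [hs', hs.2] at hcard
      have := wt_le_of_le hle
      omega
  · intro y hy
    simp only [coe_filter, mem_univ, true_and, Set.mem_ofPred_eq] at hy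
    funext i
    have := Bool.le_iff_imp.1 (hy.1 i)
    cases hu : u i <;> cases hy' : y i <;> simp_all
  · intro s hs
    simp only [mem_coe, mem_powersetCard] at hs
    have hsub : ∀ i ∈ s, u i = false ∧ v i = true := fun i hi => by simpa using hs.1 hi
    ext i
    by_cases hi : i ∈ s <;> simp [hi, hsub]

end BoolVectors

section Paths

variable {n : ℕ}

theorem wt_pathPoint (π : Equiv.Perm (Fin n)) {j : ℕ} (hj : j ≤ n) : wt (pathPoint π j) = j := by
  rw [wt, card_equiv π.symm (t := {i : Fin n | (i : ℕ) < j}) (by simp [pathPoint]),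
    Fin.card_filter_val_lt, min_eq_right hj]

theorem pathPoint_mono (π : Equiv.Perm (Fin n)) : Monotone (pathPoint π) :=
  fun _ _ hjk _ => Bool.le_iff_imp.2 fun h => by
    simp only [pathPoint, decide_eq_true_eq] at h ⊢
    omega

theorem pathPoint_mul (σ π : Equiv.Perm (Fin n)) (j : ℕ) :
    pathPoint (σ * π) j = pathPoint π j ∘ σ.symm :=
  rfl

theorem pathsThrough_nonempty (x : Fin n → Bool) : (pathsThrough n x).Nonempty := by
  obtain ⟨σ, hσ, -⟩ := exists_perm_comp_eq_of_le (le_refl x) (le_refl _)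
    (wt_pathPoint 1 (wt_le x)).symm (wt_pathPoint 1 (wt_le x)).symm
  refine ⟨σ⁻¹, mem_filter.2 ⟨mem_univ _, ?_⟩⟩
  rw [← mul_one σ⁻¹, pathPoint_mul]
  exact hσ

theorem card_filter_pathPoint_eq_of_comp_perm {x y y' : Fin n → Bool} {j : ℕ}
    {σ : Equiv.Perm (Fin n)} (hx : x ∘ σ = x) (hy : y' ∘ σ = y) :
    #{π ∈ pathsThrough n x | pathPoint π j = y} = #{π ∈ pathsThrough n x | pathPoint π j = y'} :=
  card_equiv (Equiv.mulLeft σ) fun π => by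
    simp [pathsThrough, Equiv.coe_mulLeft, pathPoint_mul, Equiv.comp_symm_eq, hx, hy]

noncomputable def pathLevelProb (x : Fin n → Bool) (A : Finset (Fin n → Bool)) (j : ℕ) : ℝ :=
  (#{π ∈ pathsThrough n x | pathPoint π j ∈ A} : ℝ) / #(pathsThrough n x)

theorem pathLevelProb_eq_div_card {x : Fin n → Bool} {j : ℕ} {Y : Finset (Fin n → Bool)}
    (hY : ∀ π ∈ pathsThrough n x, pathPoint π j ∈ Y)
    (htrans : ∀ y ∈ Y, ∀ y' ∈ Y, ∃ σ : Equiv.Perm (Fin n), x ∘ σ = x ∧ y' ∘ σ = y)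
    (A : Finset (Fin n → Bool)) :
    pathLevelProb x A j = (#{y ∈ A | y ∈ Y} : ℝ) / #Y := by
  obtain ⟨π, hπ⟩ := pathsThrough_nonempty x
  have hcount := card_filter_mem_mul_card_eq_of_card_fiber_eq hY (fun y hy y' hy' => by
    obtain ⟨σ, hx, hy⟩ := htrans y hy y' hy'
    exact card_filter_pathPoint_eq_of_comp_perm hx hy) A
  rw [pathLevelProb, div_eq_div_iff (by exact_mod_cast (card_pos.2 ⟨π, hπ⟩).ne')
    (by exact_mod_cast (card_pos.2 ⟨_, hY π hπ⟩).ne'), mul_comm (#{y ∈ A | y ∈ Y} : ℝ)]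
  exact_mod_cast hcount

open Classical in
theorem pathLevelProb_eq_densDown (x : Fin n → Bool) (A : Finset (Fin n → Bool)) {j : ℕ}
    (hj : j ≤ wt x) : pathLevelProb x A j = densDown x A (wt x - j) := by
  set Y : Finset (Fin n → Bool) := {y | y ≤ x ∧ wt y = j}
  have hY : #Y = (wt x).choose j := by
    simpa [wt_bot] using card_filter_le_le_wt_eq (bot_le (a := x)) (j := j) (by simp [wt_bot])
  have hA : {y ∈ A | y ∈ Y} = {y ∈ A | (∀ i, y i ≤ x i) ∧ hamm y x = wt x - j} := by
    refine filter_congr fun y _ => ?_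
    simp only [Y, mem_filter, mem_univ, true_and]
    refine and_congr_right fun hyx => ?_
    rw [hamm_eq_wt_sub_wt hyx]
    have := wt_le_of_le hyx
    omega
  rw [pathLevelProb_eq_div_card (Y := Y) (fun π hπ => ?_) (fun y hy y' hy' => ?_), hA, hY,
    densDown, if_pos (Nat.sub_le _ _), Nat.choose_symm hj]
  · simp only [Y, mem_filter, mem_univ, true_and]
    exact ⟨(mem_filter.1 hπ).2 ▸ pathPoint_mono π hj, wt_pathPoint π (hj.trans (wt_le x))⟩
  · simp only [Y, mem_filter, mem_univ, true_and] at hy hy'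
    obtain ⟨σ, hy, hx⟩ := exists_perm_comp_eq_of_le hy.1 hy'.1 (hy.2.trans hy'.2.symm) rfl
    exact ⟨σ, hx, hy⟩

open Classical in
theorem pathLevelProb_eq_densUp (x : Fin n → Bool) (A : Finset (Fin n → Bool)) {j : ℕ}
    (hj : wt x ≤ j) (hjn : j ≤ n) : pathLevelProb x A j = densUp x A (j - wt x) := by
  set Y : Finset (Fin n → Bool) := {y | x ≤ y ∧ wt y = j}
  have hY : #Y = (n - wt x).choose (j - wt x) := by
    simpa [wt_top] using card_filter_le_le_wt_eq (le_top (a := x)) hj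
  have hA : {y ∈ A | y ∈ Y} = {y ∈ A | (∀ i, x i ≤ y i) ∧ hamm x y = j - wt x} := by
    refine filter_congr fun y _ => ?_
    simp only [Y, mem_filter, mem_univ, true_and]
    refine and_congr_right fun hxy => ?_
    rw [hamm_eq_wt_sub_wt hxy]
    have := wt_le_of_le hxy
    omega
  rw [pathLevelProb_eq_div_card (Y := Y) (fun π hπ => ?_) (fun y hy y' hy' => ?_), hA, hY,
    densUp, if_pos (by omega)]
  · simp only [Y, mem_filter, mem_univ, true_and]
    exact ⟨(mem_filter.1 hπ).2 ▸ pathPoint_mono π hj, wt_pathPoint π hjn⟩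
  · simp only [Y, mem_filter, mem_univ, true_and] at hy hy'
    exact exists_perm_comp_eq_of_le hy.1 hy'.1 rfl (hy.2.trans hy'.2.symm)

theorem sum_range_pathLevelProb (x : Fin n → Bool) (A : Finset (Fin n → Bool)) :
    ∑ j ∈ range (n + 1), pathLevelProb x A j = scoreDown x A + scoreUp x A := by
  have hw := wt_le x
  have hdown : scoreDown x A = ∑ k ∈ range (wt x + 1), densDown x A k := by
    refine (sum_subset (fun k hk => ?_) fun k hk hk' => ?_).symm
    · simp only [mem_range] at hk ⊢; omega
    · simp only [mem_range] at hk hk'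
      rw [densDown, if_neg (by omega)]
  have hup : scoreUp x A = ∑ k ∈ Ico 1 (n - wt x + 1), densUp x A k := by
    refine (sum_subset (fun k hk => ?_) fun k hk hk' => ?_).symm
    · simp only [mem_Ico, mem_Icc] at hk ⊢; omega
    · simp only [mem_Ico, mem_Icc] at hk hk'
      rw [densUp, if_neg (by omega)]
  rw [hdown, hup, ← sum_range_add_sum_Ico _ (by omega : wt x + 1 ≤ n + 1), ← sum_range_reflect,
    ← show 1 + wt x = wt x + 1 by ring, ← show n - wt x + 1 + wt x = n + 1 by omega,
    ← sum_Ico_add']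
  congr 1
  · refine sum_congr rfl fun j hj => ?_
    rw [mem_range] at hj
    rw [pathLevelProb_eq_densDown x A (by omega)]
    congr 1
    omega
  · refine sum_congr rfl fun k hk => ?_
    rw [mem_Ico] at hk
    rw [pathLevelProb_eq_densUp x A (by omega) (by omega)]
    congr 1
    omega

end Paths

section MiddleLevels

variable {n : ℕ} {ε : ℝ}

noncomputable def midLevels (n : ℕ) (ε : ℝ) : Finset ℕ :=
  Icc ((n - dPar n ε + 1) / 2) (min n ((n + dPar n ε) / 2))

theorem mem_Lmid_iff {x : Fin n → Bool} : x ∈ Lmid n ε ↔ wt x ∈ midLevels n ε := by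
  have hw := wt_le x
  have h₁ : ((n : ℝ) - dPar n ε) / 2 ≤ wt x ↔ n ≤ 2 * wt x + dPar n ε := by
    rw [div_le_iff₀ two_pos, sub_le_iff_le_add]
    norm_cast
    rw [mul_comm]
  have h₂ : (wt x : ℝ) ≤ ((n : ℝ) + dPar n ε) / 2 ↔ 2 * wt x ≤ n + dPar n ε := by
    rw [le_div_iff₀ two_pos]
    norm_cast
    rw [mul_comm]
  simp only [Lmid, mem_filter, mem_univ, true_and, h₁, h₂, midLevels, mem_Icc]
  omega

theorem pmidIdx_eq_midLevels (π : Equiv.Perm (Fin n)) : pmidIdx n ε π = midLevels n ε := by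
  ext j
  simp only [pmidIdx, mem_filter, mem_range]
  constructor
  · rintro ⟨hj, hπ⟩
    simpa [wt_pathPoint π (Nat.lt_succ_iff.1 hj)] using mem_Lmid_iff.1 hπ
  · intro hj
    have hjn : j ≤ n := by simp only [midLevels, mem_Icc] at hj; omega
    exact ⟨Nat.lt_succ_iff.2 hjn, mem_Lmid_iff.2 (by rwa [wt_pathPoint π hjn])⟩

theorem prYinA_eq_score_div_card {A : Finset (Fin n → Bool)} (hA : A ⊆ Lmid n ε)
    (x : Fin n → Bool) :
    prYinA n ε x A = (scoreDown x A + scoreUp x A) / #(midLevels n ε) := by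
  have hzero : ∀ j ∈ range (n + 1), j ∉ midLevels n ε → pathLevelProb x A j = 0 := by
    intro j hj hjJ
    rw [pathLevelProb, filter_false_of_mem, card_empty, Nat.cast_zero, zero_div]
    intro π _ hπA
    refine hjJ ?_
    rw [← wt_pathPoint π (Nat.lt_succ_iff.1 (mem_range.1 hj))]
    exact mem_Lmid_iff.1 (hA hπA)
  have hsub : midLevels n ε ⊆ range (n + 1) := fun j hj => by
    simp only [midLevels, mem_Icc, mem_range] at hj ⊢
    omega
  rw [← sum_range_pathLevelProb, ← sum_subset hsub hzero, prYinA]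
  simp only [pmidIdx_eq_midLevels, pathLevelProb, ← sum_div]
  rw [div_right_comm, ← Nat.cast_sum, ← Nat.cast_sum]
  congr 3
  exact sum_card_bipartiteAbove_eq_sum_card_bipartiteBelow _

theorem card_midLevels_le : #(midLevels n ε) ≤ dPar n ε + 1 := by
  rw [midLevels, Nat.card_Icc]
  omega

theorem min_le_card_midLevels : min (dPar n ε) (n + 1) ≤ #(midLevels n ε) := by
  rw [midLevels, Nat.card_Icc]
  omega

theorem two_mul_sqrt_le_dPar (n : ℕ) (ε : ℝ) :
    2 * √(2 * n * Real.log (100 / ε)) ≤ dPar n ε := by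
  rw [dPar, Nat.cast_mul, Nat.cast_ofNat]
  exact mul_le_mul_of_nonneg_left (Nat.le_ceil _) two_pos.le

theorem dPar_lt_two_mul_sqrt_add_two (n : ℕ) (ε : ℝ) :
    (dPar n ε : ℝ) < 2 * √(2 * n * Real.log (100 / ε)) + 2 := by
  rw [dPar, Nat.cast_mul, Nat.cast_ofNat]
  linarith [Nat.ceil_lt_add_one (Real.sqrt_nonneg (2 * n * Real.log (100 / ε)))]

end MiddleLevels

theorem Real.log_div_le_eight_mul_log_one_div {ε : ℝ} (hε₀ : 0 < ε) (hε : ε ≤ 1 / 2) :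
    Real.log (100 / ε) ≤ 8 * Real.log (1 / ε) := by
  have h2 : 2 ≤ 1 / ε := by rw [le_div_iff₀ hε₀]; linarith
  rw [show (8 : ℝ) = (8 : ℕ) by norm_num, ← Real.log_pow]
  refine Real.log_le_log (by positivity) ?_
  calc 100 / ε = 100 * (1 / ε) := by ring
    _ ≤ 2 ^ 7 * (1 / ε) := by gcongr; norm_num
    _ ≤ (1 / ε) ^ 7 * (1 / ε) := by gcongr
    _ = (1 / ε) ^ 8 := by ring

theorem Real.one_le_mul_log {a b : ℝ} (ha : 2 ≤ a) (hb : 2 ≤ b) : 1 ≤ a * Real.log b := by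
  have := Real.log_le_log two_pos hb
  nlinarith [Real.log_two_gt_d9]

section Regime

variable {n : ℕ} {ε : ℝ}

theorem two_le_one_div_le_cast (hn : 1 ≤ n) (hε₁ : 1 / (n : ℝ) ≤ ε) (hε₂ : ε ≤ 1 / 2) :
    2 ≤ 1 / ε ∧ 1 / ε ≤ n := by
  have hn₀ : (0 : ℝ) < n := by exact_mod_cast hn
  have hε₀ : 0 < ε := (one_div_pos.2 hn₀).trans_le hε₁
  refine ⟨by rw [le_div_iff₀ hε₀]; linarith, ?_⟩
  rw [div_le_iff₀ hε₀]
  rwa [div_le_iff₀ hn₀, mul_comm] at hε₁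

theorem one_le_mul_log_one_div (hn : 1 ≤ n) (hε₁ : 1 / (n : ℝ) ≤ ε) (hε₂ : ε ≤ 1 / 2) :
    1 ≤ n * Real.log (1 / ε) :=
  have ⟨hinv₂, hinvn⟩ := two_le_one_div_le_cast hn hε₁ hε₂
  Real.one_le_mul_log (hinv₂.trans hinvn) hinv₂

theorem sqrt_le_card_midLevels_le (hn : 1 ≤ n) (hε₁ : 1 / (n : ℝ) ≤ ε) (hε₂ : ε ≤ 1 / 2) :
    √(n * Real.log (1 / ε)) ≤ #(midLevels n ε) ∧
      (#(midLevels n ε) : ℝ) ≤ 11 * √(n * Real.log (1 / ε)) := by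
  obtain ⟨hinv₂, hinvn⟩ := two_le_one_div_le_cast hn hε₁ hε₂
  have hε₀ : 0 < ε := one_div_pos.1 (two_pos.trans_le hinv₂)
  have hn₀ : (0 : ℝ) < n := by exact_mod_cast hn
  set L := Real.log (1 / ε)
  set T := Real.log (100 / ε)
  have hLT : L ≤ T := Real.log_le_log (by positivity) (by gcongr; norm_num)
  have hTL : T ≤ 8 * L := Real.log_div_le_eight_mul_log_one_div hε₀ hε₂
  have hLn : L ≤ n := (Real.log_le_log (by positivity) hinvn).trans
    ((Real.log_le_sub_one_of_pos hn₀).trans (by linarith))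
  set R := √(n * L)
  have hR₁ : 1 ≤ R := Real.one_le_sqrt.2 (one_le_mul_log_one_div hn hε₁ hε₂)
  have hRT : R ≤ √(2 * n * T) := Real.sqrt_le_sqrt (by nlinarith)
  have hTR : √(2 * n * T) ≤ 4 * R := by
    calc √(2 * n * T) ≤ √(4 ^ 2 * (n * L)) := Real.sqrt_le_sqrt (by nlinarith)
      _ = 4 * R := by rw [Real.sqrt_mul (by norm_num), Real.sqrt_sq (by norm_num)]
  have hRn : R ≤ n := by
    calc R ≤ √(n * n) := Real.sqrt_le_sqrt (mul_le_mul_of_nonneg_left hLn hn₀.le)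
      _ = n := Real.sqrt_mul_self hn₀.le
  have hd₁ := two_mul_sqrt_le_dPar n ε
  have hd₂ := dPar_lt_two_mul_sqrt_add_two n ε
  constructor
  · calc R ≤ (min (dPar n ε) (n + 1) : ℕ) := by
          rw [Nat.cast_min, Nat.cast_add_one]
          exact le_min (by linarith [Real.sqrt_nonneg (2 * n * T)]) (by linarith)
      _ ≤ #(midLevels n ε) := by exact_mod_cast min_le_card_midLevels
  · calc (#(midLevels n ε) : ℝ) ≤ dPar n ε + 1 := by exact_mod_cast card_midLevels_le
      _ ≤ 11 * R := by linarith

end Regime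

theorem score_nonneg {n : ℕ} (x : Fin n → Bool) (A : Finset (Fin n → Bool)) :
    0 ≤ scoreDown x A + scoreUp x A := by
  refine add_nonneg (sum_nonneg fun k _ => ?_) (sum_nonneg fun k _ => ?_)
  · rw [densDown]; split_ifs <;> positivity
  · rw [densUp]; split_ifs <;> positivity

theorem cond_prob_eq_score :
    ∃ c₁ c₂ : ℝ, 0 < c₁ ∧ 0 < c₂ ∧ ∀ n : ℕ, 1 ≤ n → ∀ ε : ℝ, 1 / (n : ℝ) ≤ ε → ε ≤ 1 / 2 →
      ∀ A : Finset (Fin n → Bool), A ⊆ Lmid n ε → ∀ x : Fin n → Bool, x ∈ Lmid n ε →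
        c₁ * (scoreDown x A + scoreUp x A) / Real.sqrt ((n : ℝ) * Real.log (1 / ε)) ≤
            prYinA n ε x A ∧
        prYinA n ε x A ≤
            c₂ * (scoreDown x A + scoreUp x A) / Real.sqrt ((n : ℝ) * Real.log (1 / ε)) := by
  refine ⟨1 / 11, 1, by norm_num, one_pos, fun n hn ε hε₁ hε₂ A hA x _ => ?_⟩
  obtain ⟨hlow, hupp⟩ := sqrt_le_card_midLevels_le hn hε₁ hε₂
  have hR : 0 < √(n * Real.log (1 / ε)) :=
    Real.sqrt_pos.2 (one_pos.trans_le (one_le_mul_log_one_div hn hε₁ hε₂))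
  rw [prYinA_eq_score_div_card hA x, one_mul]
  constructor
  · rw [one_div_mul_eq_div, div_div]
    exact div_le_div_of_nonneg_left (score_nonneg x A) (hR.trans_le hlow) (by linarith)
  · exact div_le_div_of_nonneg_left (score_nonneg x A) hR hlow
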